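/- arXiv:1511.05822 — 2 statements merged into one kernel-verified Lean document; each statement's English description precedes it below -/
import Mathlib

section
/- Suppose f : ℝ^d → ℝⁿ satisfies limsup_{h→0} |f(x+h) - Q(h)|/|h|^k < ∞ for some x and some polynomial Q of degree ≤ k-1, and g : ℝⁿ → ℝᵐ satisfies limsup_{h→0} |g(y+h) - P(h)|/|h|^k < ∞ for y = f(x) and some polynomial P of degree ≤ k-1. Then limsup_{h→0} |(g∘f)(x+h) - T(h)|/|h|^k < ∞, where T is the Taylor polynomial of order k-1 of P ∘ Q. -/
/-!
Write `y = f x`, `u h = f (x + h) - y` and `q h = Q h - y`. Then `u - q = O(‖h‖^k)` and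
`q = O(‖h‖)` (its constant term vanishes, since `Q 0 = f x`), so `u = O(‖h‖)` and
`g (y + u) - P u = O(‖u‖^k) = O(‖h‖^k)`. As `P` is `C¹`, it is locally Lipschitz and
`P u - P q = O(‖u - q‖) = O(‖h‖^k)`. Finally `P ∘ q` is a polynomial in `h`, and discarding its
homogeneous components of degree `≥ k` costs `O(‖h‖^k)`.
-/

open MeasureTheory Asymptotics Filter

noncomputable def polyEval {n m : ℕ} (P : Fin m → MvPolynomial (Fin n) ℝ)
    (x : Fin n → ℝ) : Fin m → ℝ :=
  fun i => MvPolynomial.eval x (P i)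

open Topology

theorem isBigO_norm_pow_of_le {E : Type*} [SeminormedAddCommGroup E] {k m : ℕ} (hkm : k ≤ m) :
    (fun h : E => ‖h‖ ^ m) =O[𝓝 0] fun h => ‖h‖ ^ k := by
  refine IsBigO.of_bound 1 ?_
  filter_upwards [Metric.closedBall_mem_nhds (0 : E) one_pos] with h hh
  rw [mem_closedBall_zero_iff] at hh
  simpa using pow_le_pow_of_le_one (norm_nonneg h) hh hkm

theorem isBigO_expansion_comp_approx {𝕜 E F G : Type*} [RCLike 𝕜] [SeminormedAddCommGroup E]
    [NormedAddCommGroup F] [NormedSpace 𝕜 F] [NormedAddCommGroup G] [NormedSpace 𝕜 G]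
    {k : ℕ} (hk : 1 ≤ k) {y : F} {g p : F → G} (hp : ContDiffAt 𝕜 1 p 0)
    (hg : (fun v => g (y + v) - p v) =O[𝓝 0] fun v => ‖v‖ ^ k)
    {u q : E → F} (hq : q =O[𝓝 0] fun h => ‖h‖)
    (huq : (fun h => u h - q h) =O[𝓝 0] fun h => ‖h‖ ^ k) :
    (fun h => g (y + u h) - p (q h)) =O[𝓝 0] fun h => ‖h‖ ^ k := by
  have hu : u =O[𝓝 0] fun h => ‖h‖ :=
    (hq.add (huq.trans (by simpa using isBigO_norm_pow_of_le (E := E) hk))).congr_left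
      fun h => add_sub_cancel (q h) (u h)
  have hu0 : Tendsto u (𝓝 0) (𝓝 0) := hu.trans_tendsto tendsto_norm_zero
  have hq0 : Tendsto q (𝓝 0) (𝓝 0) := hq.trans_tendsto tendsto_norm_zero
  have hgu : (fun h => g (y + u h) - p (u h)) =O[𝓝 0] fun h => ‖h‖ ^ k :=
    (hg.comp_tendsto hu0).trans (hu.norm_left.pow k)
  have hpuq : (fun h => p (u h) - p (q h)) =O[𝓝 0] fun h => ‖h‖ ^ k :=
    ((hp.hasStrictFDerivAt one_ne_zero).isBigO_sub.comp_tendsto (hu0.prodMk_nhds hq0)).trans huq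
  exact (hgu.add hpuq).congr_left fun h => sub_add_sub_cancel _ _ _

namespace MvPolynomial

variable {𝕜 σ : Type*}

theorem contDiff_eval [NontriviallyNormedField 𝕜] [Fintype σ] (p : MvPolynomial σ 𝕜)
    {n : WithTop ℕ∞} : ContDiff 𝕜 n fun x : σ → 𝕜 => eval x p := by
  induction p using MvPolynomial.induction_on with
  | C a => simpa only [eval_C] using contDiff_const
  | add p q hp hq => simpa only [map_add] using hp.add hq
  | mul_X p i hp =>
    simpa only [map_mul, eval_X] using hp.mul (contDiff_apply 𝕜 𝕜 i)

theorem isBigO_prod_pow [NormedField 𝕜] [Fintype σ] (a : σ →₀ ℕ) :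
    (fun h : σ → 𝕜 => ∏ i, h i ^ a i) =O[𝓝 0] fun h => ‖h‖ ^ a.degree := by
  have hcoord (i : σ) : (fun h : σ → 𝕜 => h i) =O[𝓝 0] fun h => ‖h‖ :=
    IsBigO.of_bound 1 (Eventually.of_forall fun h => by simpa using norm_le_pi_norm h i)
  refine (IsBigO.finsetProd fun i _ => (hcoord i).pow (a i)).congr_right fun h => ?_
  rw [Finset.prod_pow_eq_pow_sum, Finsupp.degree_eq_sum]

theorem isBigO_eval_of_le_degree [NormedField 𝕜] [Fintype σ] {k : ℕ} {p : MvPolynomial σ 𝕜}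
    (hp : ∀ a ∈ p.support, k ≤ a.degree) :
    (fun h : σ → 𝕜 => eval h p) =O[𝓝 0] fun h => ‖h‖ ^ k := by
  simp_rw [eval_eq']
  exact IsBigO.fun_sum fun a ha =>
    ((isBigO_prod_pow a).const_mul_left _).trans (isBigO_norm_pow_of_le (hp a ha))

theorem isBigO_eval_of_constantCoeff_eq_zero [NormedField 𝕜] [Fintype σ]
    {p : MvPolynomial σ 𝕜} (hp : constantCoeff p = 0) :
    (fun h : σ → 𝕜 => eval h p) =O[𝓝 0] fun h => ‖h‖ := by
  refine (isBigO_eval_of_le_degree (k := 1) fun a ha => ?_).congr_right fun h => pow_one _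
  rw [Nat.one_le_iff_ne_zero, Ne, Finsupp.degree_eq_zero_iff]
  rintro rfl
  exact mem_support_iff.mp ha (by rwa [← constantCoeff_eq])

theorem coeff_sum_homogeneousComponent [CommSemiring 𝕜] (p : MvPolynomial σ 𝕜) (k : ℕ)
    (a : σ →₀ ℕ) :
    coeff a (∑ j ∈ Finset.range k, homogeneousComponent j p) =
      if a.degree < k then coeff a p else 0 := by
  simp only [coeff_sum, coeff_homogeneousComponent, Finset.sum_ite_eq, Finset.mem_range]

theorem isBigO_eval_sub_sum_homogeneousComponent [NormedField 𝕜] [Fintype σ]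
    (p : MvPolynomial σ 𝕜) (k : ℕ) :
    (fun h : σ → 𝕜 => eval h p - eval h (∑ j ∈ Finset.range k, homogeneousComponent j p))
      =O[𝓝 0] fun h => ‖h‖ ^ k := by
  simp_rw [← map_sub]
  refine isBigO_eval_of_le_degree fun a ha => ?_
  by_contra! hlt
  simp [coeff_sum_homogeneousComponent, hlt] at ha

end MvPolynomial

open MvPolynomial

theorem polyEval_polyEval {d n m : ℕ} (P : Fin m → MvPolynomial (Fin n) ℝ)
    (Q : Fin n → MvPolynomial (Fin d) ℝ) (h : Fin d → ℝ) :
    polyEval P (polyEval Q h) = polyEval (fun i => aeval Q (P i)) h := by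
  funext i
  exact (comp_aeval_apply (f := Q) (aeval h) (P i)).symm

theorem contDiff_polyEval {n m : ℕ} (P : Fin m → MvPolynomial (Fin n) ℝ) {k : WithTop ℕ∞} :
    ContDiff ℝ k (polyEval P) :=
  contDiff_pi.mpr fun i => contDiff_eval (P i)

theorem isBigO_polyEval_of_constantCoeff_eq_zero {d n : ℕ} {Q : Fin n → MvPolynomial (Fin d) ℝ}
    (hQ : ∀ l, constantCoeff (Q l) = 0) :
    polyEval Q =O[𝓝 0] fun h => ‖h‖ :=
  isBigO_pi.mpr fun l => isBigO_eval_of_constantCoeff_eq_zero (hQ l)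

theorem isBigO_polyEval_sub_sum_homogeneousComponent {d m : ℕ}
    (S : Fin m → MvPolynomial (Fin d) ℝ) (k : ℕ) :
    (fun h => polyEval S h -
        polyEval (fun i => ∑ j ∈ Finset.range k, homogeneousComponent j (S i)) h)
      =O[𝓝 0] fun h => ‖h‖ ^ k :=
  isBigO_pi.mpr fun i => isBigO_eval_sub_sum_homogeneousComponent (S i) k

theorem composition_has_bigO_expansion_general
    (d n m k : ℕ) (hk : 1 ≤ k)
    (f : (Fin d → ℝ) → (Fin n → ℝ)) (g : (Fin n → ℝ) → (Fin m → ℝ))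
    (x : Fin d → ℝ)
    (Q : Fin n → MvPolynomial (Fin d) ℝ)
    (hQ : (fun h => f (x + h) - polyEval Q h) =O[nhds 0] fun h => ‖h‖ ^ k)
    (P : Fin m → MvPolynomial (Fin n) ℝ)
    (hP : (fun h => g (f x + h) - polyEval P h) =O[nhds 0] fun h => ‖h‖ ^ k) :
    -- `T` is the Taylor polynomial of order `k-1` of `u ↦ P (Q (u) - f x)`
    -- (the composition `P ∘ Q` in coordinates centered at `x` and `y = f x`).
    (fun h => (g ∘ f) (x + h) -
        polyEval (fun i => ∑ j ∈ Finset.range k,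
          MvPolynomial.homogeneousComponent j
            ((MvPolynomial.aeval fun l => Q l - MvPolynomial.C (f x l)) (P i))) h)
      =O[nhds 0] fun h => ‖h‖ ^ k := by
  have hfx : f x = polyEval Q 0 := by
    simpa [sub_eq_zero] using
      (hQ.congr_right fun h => by rw [sub_zero]).eq_zero_of_norm_pow (by omega)
  set Qc : Fin n → MvPolynomial (Fin d) ℝ := fun l => Q l - C (f x l)
  have hQc (h : Fin d → ℝ) : polyEval Qc h = polyEval Q h - f x := by
    funext l
    simp [Qc, polyEval]
  have hQc0 (l : Fin n) : constantCoeff (Qc l) = 0 := by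
    rw [map_sub, constantCoeff_C, ← eval_zero, hfx]
    exact sub_self _
  have hcomp := isBigO_expansion_comp_approx hk (contDiff_polyEval P).contDiffAt hP
    (isBigO_polyEval_of_constantCoeff_eq_zero hQc0) (u := fun h => f (x + h) - f x)
    (hQ.congr_left fun h => by rw [hQc, sub_sub_sub_cancel_right])
  have htrunc := isBigO_polyEval_sub_sum_homogeneousComponent (fun i => aeval Qc (P i)) k
  refine (hcomp.add htrunc).congr_left fun h => ?_
  rw [polyEval_polyEval, add_sub_cancel, Function.comp_apply, sub_add_sub_cancel]

theorem composition_has_bigO_expansion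
    (d n m k : ℕ) (hk : 1 ≤ k)
    (f : (Fin d → ℝ) → (Fin n → ℝ)) (g : (Fin n → ℝ) → (Fin m → ℝ))
    (x : Fin d → ℝ)
    (Q : Fin n → MvPolynomial (Fin d) ℝ) (hQdeg : ∀ i, (Q i).totalDegree ≤ k - 1)
    (hQ : (fun h => f (x + h) - polyEval Q h) =O[nhds 0] fun h => ‖h‖ ^ k)
    (P : Fin m → MvPolynomial (Fin n) ℝ) (hPdeg : ∀ i, (P i).totalDegree ≤ k - 1)
    (hP : (fun h => g (f x + h) - polyEval P h) =O[nhds 0] fun h => ‖h‖ ^ k) :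
    -- `T` is the Taylor polynomial of order `k-1` of `u ↦ P (Q (u) - f x)`
    -- (the composition `P ∘ Q` in coordinates centered at `x` and `y = f x`).
    (fun h => (g ∘ f) (x + h) -
        polyEval (fun i => ∑ j ∈ Finset.range k,
          MvPolynomial.homogeneousComponent j
            ((MvPolynomial.aeval fun l => Q l - MvPolynomial.C (f x l)) (P i))) h)
      =O[nhds 0] fun h => ‖h‖ ^ k :=
  composition_has_bigO_expansion_general d n m k hk f g x Q hQ P hP
end

section
/- Let n ≥ m be positive integers, k = n - m + 1, and f : ℝⁿ → ℝᵐ a function. Let ℓ = n - m - k' + 1 for some 1 ≤ k' ≤ k, and let A = {x ∈ ℝⁿ : |f(x+h) - f(x)| = o(|h|^{k'}) as h → 0}. Then 𝓗^ℓ(A ∩ f⁻¹(y)) = 0 for Lebesgue-almost every y ∈ ℝᵐ. -/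
/-!
Fix a bounded piece `s` of `A` and a scale `ε ≤ 1/2`. Besicovitch covers `s` by balls `B(x, r)`,
`r ≤ ε`, on which `f` is `ε`-flat of order `k'`, with total volume at most `vol s + 1`. A fibre
`f⁻¹{y}` meets `B(x, r)` only if `y ∈ B(f x, ε r^{k'})`, so the cost `(2r)^ℓ` of that ball in a
cover of the fibre is paid on a set of `y` of volume at most `(2ε)^m (2r)^{k'm}`; as
`ℓ + k'm ≥ n`, integrating over `y` costs at most `(2ε)^m (vol s + 1)`. For `ε = 2^{-p-1}` these
bounds are summable in `p`, so for almost every `y` the covering costs of the fibre tend to zero,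
and so does its Hausdorff measure.
-/

open MeasureTheory Asymptotics Filter Set Metric
open scoped ENNReal Topology

lemma le_sub_sub_add_one_add_mul {n m k : ℕ} (hm : 0 < m) (hk : 1 ≤ k) :
    n ≤ n - m - k + 1 + k * m := by
  have : k + m ≤ k * m + 1 := by nlinarith
  omega

lemma rpow_mul_pow_le_pow_of_le_one {ρ d : ℝ} (hρ : 0 < ρ) (hρ1 : ρ ≤ 1) {a n : ℕ}
    (h : (n : ℝ) ≤ d + a) : ρ ^ d * ρ ^ a ≤ ρ ^ n := by
  rw [← Real.rpow_natCast, ← Real.rpow_natCast, ← Real.rpow_add hρ]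
  exact Real.rpow_le_rpow_of_exponent_ge hρ hρ1 h

lemma ediam_closedBall_le_ofReal {X : Type*} [PseudoMetricSpace X] (x : X) (r : ℝ) :
    ediam (closedBall x r) ≤ ENNReal.ofReal (2 * r) :=
  ediam_le_of_forall_dist_le fun z hz w hw => by
    linarith [dist_triangle_right z w x, mem_closedBall.1 hz, mem_closedBall.1 hw]

lemma Asymptotics.IsLittleO.exists_mem_Ioo_forall_norm_le {E F G : Type*}
    [SeminormedAddCommGroup E] [Norm F] [Norm G] {φ : E → F} {ψ : E → G}
    (h : φ =o[𝓝 0] ψ) {ε : ℝ} (hε : 0 < ε) {δ : ℝ} (hδ : 0 < δ) :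
    ∃ ρ ∈ Ioo 0 δ, ∀ v, ‖v‖ ≤ ρ → ‖φ v‖ ≤ ε * ‖ψ v‖ := by
  obtain ⟨d, hd, hball⟩ := nhds_basis_closedBall.eventually_iff.1 (h.def hε)
  refine ⟨min d (δ / 2), ⟨lt_min hd (half_pos hδ), (min_le_right _ _).trans_lt (half_lt_self hδ)⟩,
    fun v hv => hball ?_⟩
  rw [mem_closedBall, dist_zero_right]
  exact hv.trans (min_le_left _ _)

theorem ae_hausdorffMeasure_inter_preimage_eq_zero {X Y : Type*} [EMetricSpace X]
    [MeasurableSpace X] [BorelSpace X] [MeasurableSpace Y] {ν : Measure Y} {f : X → Y}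
    {s : Set X} {d : ℝ} (hd : 0 < d) {ι : ℕ → Type*} [∀ p, Countable (ι p)]
    (U : ∀ p, ι p → Set X) (V : ∀ p, ι p → Set Y) (hV : ∀ p i, MeasurableSet (V p i))
    (δ : ℕ → ℝ≥0∞) (hδ : Tendsto δ atTop (𝓝 0)) (hU : ∀ p i, ediam (U p i) ≤ δ p)
    (hcover : ∀ p, s ⊆ ⋃ i, U p i) (hmaps : ∀ p i, MapsTo f (s ∩ U p i) (V p i))
    (hsum : ∑' p, ∑' i, ediam (U p i) ^ d * ν (V p i) ≠ ∞) :
    ∀ᵐ y ∂ν, μH[d] (s ∩ f ⁻¹' {y}) = 0 := by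
  set G : ℕ → Y → ℝ≥0∞ := fun p y => ∑' i, (V p i).indicator (fun _ => ediam (U p i) ^ d) y
  have hG : ∀ p, Measurable (G p) := fun p =>
    Measurable.tsum fun i => measurable_const.indicator (hV p i)
  have hGint : ∫⁻ y, ∑' p, G p y ∂ν ≠ ∞ := by
    have hGp : ∀ p, ∫⁻ y, G p y ∂ν = ∑' i, ediam (U p i) ^ d * ν (V p i) := fun p => by
      rw [lintegral_tsum fun i => (measurable_const.indicator (hV p i)).aemeasurable]
      simp_rw [lintegral_indicator_const (hV p _)]
    rwa [lintegral_tsum fun p => (hG p).aemeasurable, funext hGp]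
  filter_upwards [ae_lt_top (Measurable.tsum hG) hGint] with y hy
  have hfibre : ∀ p i, ediam (s ∩ f ⁻¹' {y} ∩ U p i) ^ d ≤
      (V p i).indicator (fun _ => ediam (U p i) ^ d) y := by
    intro p i
    by_cases hyV : y ∈ V p i
    · rw [indicator_of_mem hyV]
      gcongr
      exact inter_subset_right
    · have hempty : s ∩ f ⁻¹' {y} ∩ U p i = ∅ := by
        refine eq_empty_of_forall_notMem fun z ⟨⟨hzs, hzy⟩, hzU⟩ => hyV ?_
        rw [← mem_singleton_iff.1 hzy]
        exact hmaps p i ⟨hzs, hzU⟩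
      rw [hempty, ediam_empty, ENNReal.zero_rpow_of_pos hd]
      exact zero_le
  refine nonpos_iff_eq_zero.1 ?_
  calc μH[d] (s ∩ f ⁻¹' {y})
      ≤ liminf (fun p => ∑' i, ediam (s ∩ f ⁻¹' {y} ∩ U p i) ^ d) atTop :=
        Measure.hausdorffMeasure_le_liminf_tsum d _ δ hδ _
          (Eventually.of_forall fun p i => (ediam_mono inter_subset_right).trans (hU p i))
          (Eventually.of_forall fun p => by
            rw [← inter_iUnion]
            exact subset_inter subset_rfl (inter_subset_left.trans (hcover p)))
    _ ≤ liminf (G · y) atTop :=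
        liminf_le_liminf (Eventually.of_forall fun p => ENNReal.tsum_le_tsum (hfibre p))
    _ = 0 := (ENNReal.tendsto_atTop_zero_of_tsum_ne_top hy.ne).liminf_eq

lemma ediam_rpow_mul_volume_closedBall_le {n m k : ℕ} {d : ℝ} (hd : 0 ≤ d)
    (hdim : (n : ℝ) ≤ d + k * m) (x : Fin n → ℝ) (y : Fin m → ℝ) {ε r : ℝ} (hε : 0 ≤ ε)
    (hr : 0 < r) (hr1 : 2 * r ≤ 1) :
    ediam (closedBall x r) ^ d * volume (closedBall y (ε * r ^ k)) ≤
      ENNReal.ofReal ((2 * ε) ^ m) * volume (closedBall x r) := by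
  have h2r : 0 < 2 * r := by positivity
  calc ediam (closedBall x r) ^ d * volume (closedBall y (ε * r ^ k))
      ≤ ENNReal.ofReal ((2 * r) ^ d) * ENNReal.ofReal ((2 * (ε * (2 * r) ^ k)) ^ m) := by
        rw [Real.volume_pi_closedBall _ (by positivity), Fintype.card_fin,
          ← ENNReal.ofReal_rpow_of_nonneg h2r.le hd]
        gcongr
        · exact ediam_closedBall_le_ofReal x r
        · linarith
    _ ≤ ENNReal.ofReal ((2 * ε) ^ m) * volume (closedBall x r) := by
        rw [Real.volume_pi_closedBall _ hr.le, Fintype.card_fin, ← ENNReal.ofReal_mul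
          (by positivity), ← ENNReal.ofReal_mul (by positivity)]
        refine ENNReal.ofReal_le_ofReal ?_
        calc (2 * r) ^ d * (2 * (ε * (2 * r) ^ k)) ^ m
            = (2 * ε) ^ m * ((2 * r) ^ d * (2 * r) ^ (k * m)) := by ring
          _ ≤ (2 * ε) ^ m * (2 * r) ^ n := by
            gcongr
            exact rpow_mul_pow_le_pow_of_le_one h2r hr1 (by exact_mod_cast hdim)

lemma mapsTo_closedBall_of_forall_norm_sub_le {E F : Type*} [SeminormedAddCommGroup E]
    [SeminormedAddCommGroup F] {f : E → F} {x : E} {r ε : ℝ} (hε : 0 ≤ ε) {k : ℕ}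
    (h : ∀ v, ‖v‖ ≤ r → ‖f (x + v) - f x‖ ≤ ε * ‖v‖ ^ k) :
    MapsTo f (closedBall x r) (closedBall (f x) (ε * r ^ k)) := by
  intro z hz
  have hzx : ‖z - x‖ ≤ r := by rwa [← dist_eq_norm, ← mem_closedBall]
  rw [mem_closedBall, dist_eq_norm]
  calc ‖f z - f x‖ = ‖f (x + (z - x)) - f x‖ := by rw [add_sub_cancel]
    _ ≤ ε * ‖z - x‖ ^ k := h _ hzx
    _ ≤ ε * r ^ k := by gcongr

lemma exists_flat_closedBall_covering {n : ℕ} {E : Type*} [SeminormedAddCommGroup E] {k : ℕ}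
    {f : (Fin n → ℝ) → E} {s : Set (Fin n → ℝ)}
    (hflat : ∀ x ∈ s, (fun v => f (x + v) - f x) =o[𝓝 0] fun v => ‖v‖ ^ k) {ε : ℝ} (hε : 0 < ε) :
    ∃ (t : Set (Fin n → ℝ)) (r : (Fin n → ℝ) → ℝ), t.Countable ∧
      (∀ x ∈ t, r x ∈ Ioc 0 ε ∧ ∀ v, ‖v‖ ≤ r x → ‖f (x + v) - f x‖ ≤ ε * ‖v‖ ^ k) ∧
      s ⊆ ⋃ x ∈ t, closedBall x (r x) ∧
      ∑' x : t, volume (closedBall (x : Fin n → ℝ) (r x)) ≤ volume s + 1 := by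
  set F : (Fin n → ℝ) → Set ℝ := fun x =>
    {ρ | ρ ∈ Ioc 0 ε ∧ ∀ v, ‖v‖ ≤ ρ → ‖f (x + v) - f x‖ ≤ ε * ‖v‖ ^ k}
  have hF : ∀ x ∈ s, ∀ δ > 0, (F x ∩ Ioo 0 δ).Nonempty := by
    intro x hx δ hδ
    obtain ⟨ρ, ⟨hρ0, hρδ⟩, hρ⟩ :=
      (hflat x hx).exists_mem_Ioo_forall_norm_le hε (lt_min hδ hε)
    refine ⟨ρ, ⟨⟨hρ0, hρδ.le.trans (min_le_right _ _)⟩, fun v hv => ?_⟩,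
      hρ0, hρδ.trans_le (min_le_left _ _)⟩
    simpa using hρ v hv
  obtain ⟨t, r, ht, -, hr, hcover, hvol⟩ :=
    Besicovitch.exists_closedBall_covering_tsum_measure_le volume one_ne_zero F s hF
  exact ⟨t, r, ht, hr, hcover, hvol⟩

theorem ae_hausdorffMeasure_inter_preimage_eq_zero_of_isLittleO {n m k : ℕ} (hm : 0 < m)
    {d : ℝ} (hd : 0 < d) (hdim : (n : ℝ) ≤ d + k * m) {f : (Fin n → ℝ) → (Fin m → ℝ)}
    {s : Set (Fin n → ℝ)} (hs : volume s ≠ ∞)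
    (hflat : ∀ x ∈ s, (fun v => f (x + v) - f x) =o[𝓝 0] fun v => ‖v‖ ^ k) :
    ∀ᵐ y, μH[d] (s ∩ f ⁻¹' {y}) = 0 := by
  set ε : ℕ → ℝ := fun p => 2⁻¹ ^ (p + 1)
  have hε : ∀ p, 0 < ε p := fun p => by positivity
  have h2ε : ∀ p, 2 * ε p = 2⁻¹ ^ p := fun p => by simp only [ε, pow_succ]; ring
  choose t r ht hr hcover hvol using fun p => exists_flat_closedBall_covering hflat (hε p)
  have := fun p => (ht p).to_subtype
  have hr2 : ∀ p, ∀ x ∈ t p, 0 < r p x ∧ 2 * r p x ≤ 2⁻¹ ^ p := fun p x hx =>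
    ⟨(hr p x hx).1.1, h2ε p ▸ by linarith [(hr p x hx).1.2]⟩
  have hcost : ∀ p, ∑' x : t p, ediam (closedBall (x : Fin n → ℝ) (r p x)) ^ d *
      volume (closedBall (f x) (ε p * r p x ^ k)) ≤
        ENNReal.ofReal ((2⁻¹ ^ p) ^ m) * (volume s + 1) := fun p =>
    calc _ ≤ ∑' x : t p, ENNReal.ofReal ((2⁻¹ ^ p) ^ m) *
          volume (closedBall (x : Fin n → ℝ) (r p x)) :=
          ENNReal.tsum_le_tsum fun x => h2ε p ▸ ediam_rpow_mul_volume_closedBall_le hd.le hdim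
            x (f x) (hε p).le (hr2 p x x.2).1
            ((hr2 p x x.2).2.trans (pow_le_one₀ (by norm_num) (by norm_num)))
      _ ≤ _ := by rw [ENNReal.tsum_mul_left]; gcongr; exact hvol p
  have hgeom : Summable fun p : ℕ => ((2 : ℝ)⁻¹ ^ p) ^ m := by
    simp_rw [← pow_mul, mul_comm _ m, pow_mul]
    exact summable_geometric_of_lt_one (by positivity)
      (pow_lt_one₀ (by norm_num) (by norm_num) hm.ne')
  refine ae_hausdorffMeasure_inter_preimage_eq_zero hd
    (fun p (x : t p) => closedBall (x : Fin n → ℝ) (r p x))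
    (fun p x => closedBall (f x) (ε p * r p x ^ k)) (fun _ _ => measurableSet_closedBall)
    (fun p => ENNReal.ofReal (2⁻¹ ^ p)) ?_ ?_ ?_ ?_ ?_
  · simpa using ENNReal.tendsto_ofReal
      (tendsto_pow_atTop_nhds_zero_of_lt_one (by norm_num : (0 : ℝ) ≤ 2⁻¹) (by norm_num))
  · exact fun p x => (ediam_closedBall_le_ofReal _ _).trans
      (ENNReal.ofReal_le_ofReal (hr2 p x x.2).2)
  · exact fun p => (hcover p).trans_eq (biUnion_eq_iUnion _ _)
  · exact fun p x => (mapsTo_closedBall_of_forall_norm_sub_le (hε p).le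
      (hr p x x.2).2).mono_left inter_subset_right
  · refine ne_top_of_le_ne_top ?_ (ENNReal.tsum_le_tsum hcost)
    rw [ENNReal.tsum_mul_right, ← ENNReal.ofReal_tsum_of_nonneg (fun p => by positivity) hgeom]
    exact ENNReal.mul_ne_top ENNReal.ofReal_ne_top (ENNReal.add_ne_top.2 ⟨hs, ENNReal.one_ne_top⟩)

theorem zero_jet_points_null_fibers_general
    (n m : ℕ) (hm : 0 < m) (k' : ℕ)
    (hk'1 : 1 ≤ k')
    (ℓ : ℕ) (hℓ : ℓ = n - m - k' + 1)
    (f : (Fin n → ℝ) → (Fin m → ℝ)) :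
    ∀ᵐ y : Fin m → ℝ,
      μH[(ℓ : ℝ)] ({x | (fun h => f (x + h) - f x) =o[nhds 0] fun h => ‖h‖ ^ k'}
        ∩ f ⁻¹' {y}) = 0 := by
  set A : Set (Fin n → ℝ) := {x | (fun h => f (x + h) - f x) =o[nhds 0] fun h => ‖h‖ ^ k'}
  have hdim : (n : ℝ) ≤ ℓ + k' * m := by
    exact_mod_cast hℓ ▸ le_sub_sub_add_one_add_mul hm hk'1
  have hball : ∀ R : ℕ, ∀ᵐ y, μH[(ℓ : ℝ)] (A ∩ closedBall 0 R ∩ f ⁻¹' {y}) = 0 := fun R =>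
    ae_hausdorffMeasure_inter_preimage_eq_zero_of_isLittleO hm (Nat.cast_pos.2 (by omega)) hdim
      ((measure_mono inter_subset_right).trans_lt measure_closedBall_lt_top).ne fun x hx => hx.1
  filter_upwards [ae_all_iff.2 hball] with y hy
  rw [← iUnion_inter_closedBall_nat A 0, iUnion_inter]
  exact measure_iUnion_null hy

theorem zero_jet_points_null_fibers
    (n m : ℕ) (hm : 0 < m) (hnm : m ≤ n) (k k' : ℕ) (hk : k = n - m + 1)
    (hk'1 : 1 ≤ k') (hk'2 : k' ≤ k)
    (ℓ : ℕ) (hℓ : ℓ = n - m - k' + 1)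
    (f : (Fin n → ℝ) → (Fin m → ℝ)) :
    ∀ᵐ y : Fin m → ℝ,
      μH[(ℓ : ℝ)] ({x | (fun h => f (x + h) - f x) =o[nhds 0] fun h => ‖h‖ ^ k'}
        ∩ f ⁻¹' {y}) = 0 :=
  zero_jet_points_null_fibers_general n m hm k' hk'1 ℓ hℓ f
end
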